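/- arXiv:1809.07136 — 2 statements merged into one kernel-verified Lean document; each statement's English description precedes it below -/
import Mathlib

section
/- With S(x₁,x₂) as in the (2,2)-periodic Schrödinger symbol with potential c_{ij} = (−1)^{i+j}c, the eigenvalues of S(x₁,x₂) are ±√(c² + (|τ(x₂)| + |τ(x₁)|)²) and ±√(c² + (|τ(x₂)| − |τ(x₁)|)²). In particular the set {λ ∈ ℝ : ∃(x₁,x₂) ∈ [0,2π)², λ is an eigenvalue of S(x₁,x₂)} equals [−√(c²+16), −c] ∪ [c, √(c²+16)]. -/
/-!
Since `τ(−x) = conj τ(x)`, a direct expansion gives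
`det (λ − S) = (λ² − c² − (|τ(x₂)| + |τ(x₁)|)²) (λ² − c² − (|τ(x₂)| − |τ(x₁)|)²)`.
For the range, `|τ(x)| = 2 |cos (x / 2)|` takes every value in `[0, 2]` on `[0, 2π)`, so
`|τ(x₂)| ± |τ(x₁)|` takes exactly the values in `[−4, 4]`, and `d ↦ √(c² + d²)` maps `[0, 4]`
onto `[c, √(c² + 16)]`; the spectrum is symmetric under `λ ↦ −λ`.
-/

open Matrix Real

noncomputable section

/-- `τ(x) = 1 + e^{ix}`. -/
def tau (x : ℝ) : ℂ := 1 + Complex.exp (x * Complex.I)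

/-- The symbol of the (2,2)-periodic discrete Schrödinger operator with potential
`c_{ij} = (−1)^{i+j} c`. -/
def symb (c x₁ x₂ : ℝ) : Matrix (Fin 2 ⊕ Fin 2) (Fin 2 ⊕ Fin 2) ℂ :=
  Matrix.fromBlocks
    !![(c : ℂ), tau x₂; tau (-x₂), (-c : ℂ)]
    (tau x₁ • (1 : Matrix (Fin 2) (Fin 2) ℂ))
    (tau (-x₁) • (1 : Matrix (Fin 2) (Fin 2) ℂ))
    !![(-c : ℂ), tau x₂; tau (-x₂), (c : ℂ)]

open Set ComplexConjugate

lemma tau_neg (x : ℝ) : tau (-x) = conj (tau x) := by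
  simp [tau, ← Complex.exp_conj]

lemma tau_eq_two_cos_mul_exp (x : ℝ) :
    tau x = 2 * Real.cos (x / 2) * Complex.exp (↑(x / 2) * Complex.I) := by
  rw [tau, Complex.ofReal_cos, Complex.two_cos, add_mul, ← Complex.exp_add, ← Complex.exp_add]
  push_cast
  ring_nf
  simp [add_comm]

lemma norm_tau (x : ℝ) : ‖tau x‖ = 2 * |Real.cos (x / 2)| := by
  rw [tau_eq_two_cos_mul_exp, norm_mul, Complex.norm_exp_ofReal_mul_I, mul_one, norm_mul,
    Complex.norm_ofNat, Complex.norm_real, Real.norm_eq_abs]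

lemma image_norm_tau_Ico : (fun x => ‖tau x‖) '' Ico 0 (2 * π) = Icc 0 2 := by
  refine Subset.antisymm ?_ fun a ⟨ha₀, ha₂⟩ => ?_
  · rintro _ ⟨x, -, rfl⟩
    dsimp only
    rw [norm_tau]
    exact ⟨by positivity, by linarith [abs_cos_le_one (x / 2)]⟩
  · refine ⟨2 * arccos (a / 2), ⟨by linarith [arccos_nonneg (a / 2)], ?_⟩, ?_⟩
    · linarith [arccos_le_pi_div_two.2 (by positivity : 0 ≤ a / 2), pi_pos]
    · dsimp only
      rw [norm_tau, mul_div_cancel_left₀ _ two_ne_zero, cos_arccos (by linarith) (by linarith),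
        abs_of_nonneg (by positivity)]
      ring

lemma det_scalar_sub_fromBlocks (c u v t : ℂ) :
    (scalar _ t - fromBlocks !![c, v; conj v, -c] (u • 1) (conj u • 1) !![-c, v; conj v, c]).det
      = (t ^ 2 - (c ^ 2 + ((‖v‖ : ℂ) + ‖u‖) ^ 2)) * (t ^ 2 - (c ^ 2 + ((‖v‖ : ℂ) - ‖u‖) ^ 2)) := by
  have hM : reindex finSumFinEquiv finSumFinEquiv (scalar _ t -
      fromBlocks !![c, v; conj v, -c] (u • 1) (conj u • 1) !![-c, v; conj v, c]) =
      !![t - c, -v, -u, 0; -conj v, t + c, 0, -u; -conj u, 0, t + c, -v; 0, -conj u, -conj v, t - c] := by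
    ext i j
    fin_cases i <;> fin_cases j <;> simp [finSumFinEquiv, Fin.addCases, one_apply]
  have hu : u * conj u = (‖u‖ : ℂ) ^ 2 := Complex.mul_conj' u
  have hv : v * conj v = (‖v‖ : ℂ) ^ 2 := Complex.mul_conj' v
  rw [← det_reindex_self finSumFinEquiv, hM, det_succ_row_zero]
  simp only [det_succ_row_zero, Fin.sum_univ_succ, det_unique, Fin.default_eq_zero, submatrix_apply,
    of_apply, cons_val, Fin.succAbove, Fin.coe_ofNat_eq_mod, Fin.reduceSucc, Fin.reduceCastSucc,
    Fin.reduceLT, ↓reduceIte]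
  -- the determinant is `(t² - c² - |u|² - |v|²)² - 4 |u|² |v|²`, with `|u|² = u * conj u`
  linear_combination
    (u * conj u + v * conj v + ‖u‖ ^ 2 + ‖v‖ ^ 2 - 2 * (t ^ 2 - c ^ 2) - 4 * v * conj v) * hu +
    (u * conj u + v * conj v + ‖u‖ ^ 2 + ‖v‖ ^ 2 - 2 * (t ^ 2 - c ^ 2) - 4 * ‖u‖ ^ 2) * hv

lemma mul_sq_sub_sq_eq_zero_iff {R : Type*} [CommRing R] [IsDomain R] {t r s : R} :
    (t ^ 2 - r ^ 2) * (t ^ 2 - s ^ 2) = 0 ↔ t = r ∨ t = s ∨ t = -s ∨ t = -r := by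
  simp only [mul_eq_zero, sub_eq_zero, sq_eq_sq_iff_eq_or_eq_neg]
  tauto

lemma ofReal_sq_add_sq_eq_sqrt_sq (c d : ℝ) :
    (c : ℂ) ^ 2 + (d : ℂ) ^ 2 = ((√(c ^ 2 + d ^ 2) : ℝ) : ℂ) ^ 2 := by
  exact_mod_cast (sq_sqrt (by positivity : 0 ≤ c ^ 2 + d ^ 2)).symm

theorem spectrum_symb_eq (c x₁ x₂ : ℝ) :
    spectrum ℂ (symb c x₁ x₂) =
      {((√(c ^ 2 + (‖tau x₂‖ + ‖tau x₁‖) ^ 2) : ℝ) : ℂ),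
       ((√(c ^ 2 + (‖tau x₂‖ - ‖tau x₁‖) ^ 2) : ℝ) : ℂ),
       ((-√(c ^ 2 + (‖tau x₂‖ - ‖tau x₁‖) ^ 2) : ℝ) : ℂ),
       ((-√(c ^ 2 + (‖tau x₂‖ + ‖tau x₁‖) ^ 2) : ℝ) : ℂ)} := by
  ext t
  rw [mem_spectrum_iff_isRoot_charpoly, Polynomial.IsRoot, eval_charpoly, symb, tau_neg, tau_neg,
    det_scalar_sub_fromBlocks, ← Complex.ofReal_add, ← Complex.ofReal_sub,
    ofReal_sq_add_sq_eq_sqrt_sq, ofReal_sq_add_sq_eq_sqrt_sq, mul_sq_sub_sq_eq_zero_iff]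
  simp only [mem_insert_iff, mem_singleton_iff, Complex.ofReal_neg]

lemma ofReal_mem_spectrum_symb_iff (c x₁ x₂ t : ℝ) :
    (t : ℂ) ∈ spectrum ℂ (symb c x₁ x₂) ↔
      |t| = √(c ^ 2 + (‖tau x₂‖ + ‖tau x₁‖) ^ 2) ∨ |t| = √(c ^ 2 + (‖tau x₂‖ - ‖tau x₁‖) ^ 2) := by
  rw [spectrum_symb_eq, abs_eq (sqrt_nonneg _), abs_eq (sqrt_nonneg _)]
  simp only [mem_insert_iff, mem_singleton_iff, Complex.ofReal_inj]
  tauto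

lemma image_sqrt_sq_add_sq_Icc {c : ℝ} (hc : 0 ≤ c) :
    (fun d => √(c ^ 2 + d ^ 2)) '' Icc 0 4 = Icc c √(c ^ 2 + 16) := by
  refine Subset.antisymm ?_ fun μ ⟨hcμ, hμ⟩ => ?_
  · rintro _ ⟨d, ⟨hd₀, hd₄⟩, rfl⟩
    exact ⟨le_sqrt_of_sq_le (by nlinarith), sqrt_le_sqrt (by nlinarith)⟩
  · have hμ2 : μ ^ 2 ≤ c ^ 2 + 16 := by nlinarith [sq_sqrt (by positivity : 0 ≤ c ^ 2 + 16)]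
    have hcμ2 : c ^ 2 ≤ μ ^ 2 := pow_le_pow_left₀ hc hcμ 2
    refine ⟨√(μ ^ 2 - c ^ 2), ⟨sqrt_nonneg _, ?_⟩, ?_⟩
    · rw [sqrt_le_left (by norm_num)]
      linarith
    · dsimp only
      rw [sq_sqrt (by linarith), add_sub_cancel, sqrt_sq (by linarith)]

lemma exists_Icc_eq_sqrt_iff {c μ : ℝ} (hc : 0 ≤ c) :
    (∃ a₁ ∈ Icc (0 : ℝ) 2, ∃ a₂ ∈ Icc (0 : ℝ) 2,
      μ = √(c ^ 2 + (a₂ + a₁) ^ 2) ∨ μ = √(c ^ 2 + (a₂ - a₁) ^ 2)) ↔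
      μ ∈ Icc c √(c ^ 2 + 16) := by
  rw [← image_sqrt_sq_add_sq_Icc hc]
  constructor
  · rintro ⟨a₁, ⟨h₁, h₁'⟩, a₂, ⟨h₂, h₂'⟩, rfl | rfl⟩
    · exact ⟨a₂ + a₁, ⟨by linarith, by linarith⟩, rfl⟩
    · exact ⟨|a₂ - a₁|, ⟨abs_nonneg _, abs_le.2 ⟨by linarith, by linarith⟩⟩, by simp only [sq_abs]⟩
  · rintro ⟨d, ⟨hd₀, hd₄⟩, rfl⟩
    exact ⟨d / 2, ⟨by linarith, by linarith⟩, d / 2, ⟨by linarith, by linarith⟩, Or.inl (by ring_nf)⟩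

lemma mem_Icc_neg_union_Icc_iff_abs_mem {a b x : ℝ} (ha : 0 ≤ a) :
    x ∈ Icc (-b) (-a) ∪ Icc a b ↔ |x| ∈ Icc a b := by
  simp only [mem_union, mem_Icc]
  rcases abs_cases x with ⟨hx, -⟩ | ⟨hx, -⟩ <;> rw [hx] <;> grind

/-- The eigenvalues of the symbol are `±√(c² + (|τ(x₂)| ± |τ(x₁)|)²)`, and the set of
all eigenvalues over the torus is `[−√(c²+16), −c] ∪ [c, √(c²+16)]`. -/
theorem spectrum_symb (c : ℝ) (hc : 0 < c) :
    (∀ x₁ x₂ : ℝ,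
      spectrum ℂ (symb c x₁ x₂) =
        {((Real.sqrt (c ^ 2 + (‖tau x₂‖ + ‖tau x₁‖) ^ 2) : ℝ) : ℂ),
         ((Real.sqrt (c ^ 2 + (‖tau x₂‖ - ‖tau x₁‖) ^ 2) : ℝ) : ℂ),
         ((-Real.sqrt (c ^ 2 + (‖tau x₂‖ - ‖tau x₁‖) ^ 2) : ℝ) : ℂ),
         ((-Real.sqrt (c ^ 2 + (‖tau x₂‖ + ‖tau x₁‖) ^ 2) : ℝ) : ℂ)}) ∧
    {lam : ℝ | ∃ x₁ ∈ Set.Ico (0 : ℝ) (2 * π), ∃ x₂ ∈ Set.Ico (0 : ℝ) (2 * π),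
        ((lam : ℂ) ∈ spectrum ℂ (symb c x₁ x₂))} =
      Set.Icc (-Real.sqrt (c ^ 2 + 16)) (-c) ∪ Set.Icc c (Real.sqrt (c ^ 2 + 16)) := by
  refine ⟨spectrum_symb_eq c, ?_⟩
  ext lam
  rw [mem_Icc_neg_union_Icc_iff_abs_mem hc.le, ← exists_Icc_eq_sqrt_iff hc.le,
    ← image_norm_tau_Ico]
  simp only [mem_ofPred_eq, ofReal_mem_spectrum_symb_iff, exists_mem_image]

end
end

section
/- With c₁, c₂ > 0, A and B as above, the function z₊(x₁,x₂) = A + √(A²−B) attains its minimum over [0,2π)² at (π,π), and min z₊ = (c₁²+c₂²)/2 + |c₁²−c₂²|/2 = max(c₁², c₂²). -/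
/-!
Write `tᵢ = |τ(xᵢ)|² ≥ 0`. Then `A` is increasing in `t₁, t₂`, and so is
`A² − B = [(c₁−c₂)²/2 + 2t₂][(c₁+c₂)²/2 + 2t₁]`, a product of two nonnegative factors. Hence
`z₊ = A + √(A² − B)` is smallest when `t₁ = t₂ = 0`, which happens at `x₁ = x₂ = π` because
`τ(π) = 0`; there `√(A² − B) = |c₁² − c₂²|/2`.
-/

open Real

noncomputable section

/-- `A = (c₁²+c₂²)/2 + |τ(x₁)|² + |τ(x₂)|²`. -/
def Aval (c₁ c₂ x₁ x₂ : ℝ) : ℝ :=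
  (c₁ ^ 2 + c₂ ^ 2) / 2 + ‖tau x₁‖ ^ 2 + ‖tau x₂‖ ^ 2

/-- `B = (|τ(x₂)|² − |τ(x₁)|² − c₁c₂)²`. -/
def Bval (c₁ c₂ x₁ x₂ : ℝ) : ℝ :=
  (‖tau x₂‖ ^ 2 - ‖tau x₁‖ ^ 2 - c₁ * c₂) ^ 2

/-- The upper root `z₊ = A + √(A²−B)`. -/
def zPlus (c₁ c₂ x₁ x₂ : ℝ) : ℝ :=
  Aval c₁ c₂ x₁ x₂ + Real.sqrt (Aval c₁ c₂ x₁ x₂ ^ 2 - Bval c₁ c₂ x₁ x₂)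

lemma tau_pi : tau π = 0 := by
  simp [tau, Complex.exp_pi_mul_I]

lemma Aval_sq_sub_Bval (c₁ c₂ x₁ x₂ : ℝ) :
    Aval c₁ c₂ x₁ x₂ ^ 2 - Bval c₁ c₂ x₁ x₂ =
      ((c₁ - c₂) ^ 2 / 2 + 2 * ‖tau x₂‖ ^ 2) * ((c₁ + c₂) ^ 2 / 2 + 2 * ‖tau x₁‖ ^ 2) := by
  unfold Aval Bval
  ring

lemma zPlus_pi_pi (c₁ c₂ : ℝ) :
    zPlus c₁ c₂ π π = (c₁ ^ 2 + c₂ ^ 2) / 2 + |c₁ ^ 2 - c₂ ^ 2| / 2 := by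
  have hdisc : ((c₁ - c₂) ^ 2 / 2 + 2 * ‖tau π‖ ^ 2) * ((c₁ + c₂) ^ 2 / 2 + 2 * ‖tau π‖ ^ 2) =
      ((c₁ ^ 2 - c₂ ^ 2) / 2) ^ 2 := by
    rw [tau_pi, norm_zero]
    ring
  rw [zPlus, Aval_sq_sub_Bval, hdisc, sqrt_sq_eq_abs, abs_div, abs_two, Aval, tau_pi, norm_zero]
  ring

lemma zPlus_pi_pi_le (c₁ c₂ x₁ x₂ : ℝ) : zPlus c₁ c₂ π π ≤ zPlus c₁ c₂ x₁ x₂ := by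
  unfold zPlus
  rw [Aval_sq_sub_Bval, Aval_sq_sub_Bval]
  have hA : Aval c₁ c₂ π π ≤ Aval c₁ c₂ x₁ x₂ := by
    unfold Aval
    rw [tau_pi, norm_zero]
    linarith [sq_nonneg ‖tau x₁‖, sq_nonneg ‖tau x₂‖]
  have hτ (x : ℝ) : ‖tau π‖ ≤ ‖tau x‖ := by
    rw [tau_pi, norm_zero]
    exact norm_nonneg _
  gcongr <;> exact hτ _

lemma half_add_add_abs_sub_eq_max {K : Type*} [Field K] [LinearOrder K] [IsStrictOrderedRing K]
    (a b : K) : (a + b) / 2 + |a - b| / 2 = max a b := by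
  linarith [min_add_max a b, max_sub_min_eq_abs' a b]

theorem min_zPlus_general (c₁ c₂ : ℝ) :
    (∀ x₁ ∈ Set.Ico (0 : ℝ) (2 * π), ∀ x₂ ∈ Set.Ico (0 : ℝ) (2 * π),
        zPlus c₁ c₂ π π ≤ zPlus c₁ c₂ x₁ x₂) ∧
    zPlus c₁ c₂ π π = (c₁ ^ 2 + c₂ ^ 2) / 2 + |c₁ ^ 2 - c₂ ^ 2| / 2 ∧
    zPlus c₁ c₂ π π = max (c₁ ^ 2) (c₂ ^ 2) := by
  refine ⟨fun x₁ _ x₂ _ => zPlus_pi_pi_le c₁ c₂ x₁ x₂, zPlus_pi_pi c₁ c₂, ?_⟩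
  rw [zPlus_pi_pi, half_add_add_abs_sub_eq_max]

/-- `z₊` attains its minimum over the torus at `(π, π)`, where it equals
`(c₁²+c₂²)/2 + |c₁²−c₂²|/2 = max(c₁², c₂²)`. -/
theorem min_zPlus (c₁ c₂ : ℝ) (hc₁ : 0 < c₁) (hc₂ : 0 < c₂) :
    (∀ x₁ ∈ Set.Ico (0 : ℝ) (2 * π), ∀ x₂ ∈ Set.Ico (0 : ℝ) (2 * π),
        zPlus c₁ c₂ π π ≤ zPlus c₁ c₂ x₁ x₂) ∧
    zPlus c₁ c₂ π π = (c₁ ^ 2 + c₂ ^ 2) / 2 + |c₁ ^ 2 - c₂ ^ 2| / 2 ∧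
    zPlus c₁ c₂ π π = max (c₁ ^ 2) (c₂ ^ 2) :=
  min_zPlus_general c₁ c₂

end
end
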